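/- arXiv:1209.1435 — 8 statements merged into one kernel-verified Lean document; each statement's English description precedes it below -/
import Mathlib

section
/- Let p : E → B, γ : C → E be maps of sets, ξ descent data for γ relative to p, and let c : C → H be the coequalizer (quotient) of the two maps ξ, π₂ : E×_B C → C where π₂(e,x) = x and ξ is the descent action. Then ker(c) = {(x, ξ_{γ(x),γ(y)}(x)) | x, y ∈ C, p(γ(x)) = p(γ(y))}. -/
/-- Descent data in `SET` for `γ : C → E` relative to `p : E → B`, as an action
`ξ(e,c)` on the pullback `E ×_B C = {(e,c) | p e = p (γ c)}`. -/
structure DescentData {E B C : Type*} (p : E → B) (γ : C → E) where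
  act : ∀ (e : E) (c : C), p e = p (γ c) → C
  fib : ∀ e c h, γ (act e c h) = e
  neut : ∀ c, act (γ c) c rfl = c
  assoc : ∀ (e' e'' : E) (c : C) (h' : p e' = p (γ c)) (h'' : p e'' = p (γ c)),
    act e'' (act e' c h') (by rw [fib]; exact h''.trans h'.symm) = act e'' c h''

/-! The unit and cocycle laws make `ξ(e, x) ~ x` already an equivalence relation, so the kernel
of the coequalizer is this relation itself; and every admissible `e` is `γ y` for `y = ξ(e, x)`. -/

namespace DescentData

variable {E B C : Type*} {p : E → B} {γ : C → E} (ξ : DescentData p γ)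

def Rel (u v : C) : Prop :=
  ∃ (e : E) (h : p e = p (γ v)), u = ξ.act e v h

theorem act_act_eq_self (e : E) (c : C) (h : p e = p (γ c)) :
    ξ.act (γ c) (ξ.act e c h) (by rw [ξ.fib]; exact h.symm) = c := by
  rw [ξ.assoc _ _ _ _ rfl, ξ.neut]

theorem rel_equivalence : Equivalence ξ.Rel where
  refl u := ⟨γ u, rfl, (ξ.neut u).symm⟩
  symm := by
    rintro u v ⟨e, h, rfl⟩
    exact ⟨γ v, _, (ξ.act_act_eq_self e v h).symm⟩
  trans := by
    rintro u v w ⟨e, h, rfl⟩ ⟨e', h', rfl⟩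
    exact ⟨e, by rw [ξ.fib] at h; exact h.trans h', ξ.assoc _ _ _ _ _⟩

theorem rel_iff_exists_act_fib (x z : C) :
    ξ.Rel z x ↔ ∃ (y : C) (h : p (γ x) = p (γ y)), z = ξ.act (γ y) x h.symm := by
  constructor
  · rintro ⟨e, h, rfl⟩
    refine ⟨ξ.act e x h, h.symm.trans (by rw [ξ.fib]), ?_⟩
    congr 1
    rw [ξ.fib]
  · rintro ⟨y, h, rfl⟩
    exact ⟨γ y, h.symm, rfl⟩

end DescentData

/-- let `c : C → H` be the coequalizer of `ξ` and `π₂`, i.e. the quotient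
of `C` by the equivalence relation generated by `ξ(e,x) ~ x`.  Then
`ker c = {(x, ξ_{γ x, γ y}(x)) | x y : C, p (γ x) = p (γ y)}`. -/
theorem descent_coequalizer_kernel {E B C : Type*} (p : E → B) (γ : C → E)
    (ξ : DescentData p γ) (x z : C) :
    Quot.mk (fun u v : C => ∃ (e : E) (h : p e = p (γ v)), u = ξ.act e v h) x =
      Quot.mk (fun u v : C => ∃ (e : E) (h : p e = p (γ v)), u = ξ.act e v h) z ↔
    ∃ (y : C) (h : p (γ x) = p (γ y)), z = ξ.act (γ y) x h.symm := by
  change Quot.mk ξ.Rel x = Quot.mk ξ.Rel z ↔ _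
  rw [Quot.eq, ξ.rel_equivalence.eqvGen_iff, ← ξ.rel_iff_exists_act_fib]
  exact ⟨ξ.rel_equivalence.symm, ξ.rel_equivalence.symm⟩
end

section
/- In a category with pullbacks, given p : E → B and descent data ξ : T^p γ → γ for γ : C → E relative to p (i.e. ξ ∘ η^p_γ = id and ξ ∘ T^p ξ = ξ ∘ μ^p_γ), the pair of maps ⟨ξ, π₂⟩ : E×_B C → C × C is a monomorphism. -/
open CategoryTheory Limits

section
variable {C : Type*} [Category C] [HasPullbacks C]

/-- The unit `η^p_γ : γ → T^p γ` of the monad `T^p = p* ∘ p_*`, where `T^p γ` is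
realized as the pullback `E ×_B X` of `p` and `γ ≫ p`. -/
noncomputable def etaP {E B X : C} (p : E ⟶ B) (γ : X ⟶ E) : X ⟶ pullback p (γ ≫ p) :=
  pullback.lift γ (𝟙 X) (by simp)

/-- The action of the monad `T^p` on a morphism `φ` of the slice category over `E`. -/
noncomputable def Tmap {E B : C} (p : E ⟶ B) {X Y : C} {γX : X ⟶ E} {γY : Y ⟶ E}
    (φ : X ⟶ Y) (hφ : φ ≫ γY = γX) : pullback p (γX ≫ p) ⟶ pullback p (γY ≫ p) :=
  pullback.lift (pullback.fst p (γX ≫ p)) (pullback.snd p (γX ≫ p) ≫ φ)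
    (by rw [pullback.condition]; simp [← hφ])

/-- The multiplication `μ^p_γ : T^p T^p γ → T^p γ` of the monad `T^p`. -/
noncomputable def muP {E B X : C} (p : E ⟶ B) (γ : X ⟶ E) :
    pullback p (pullback.fst p (γ ≫ p) ≫ p) ⟶ pullback p (γ ≫ p) :=
  pullback.lift (pullback.fst p (pullback.fst p (γ ≫ p) ≫ p))
    (pullback.snd p (pullback.fst p (γ ≫ p) ≫ p) ≫ pullback.snd p (γ ≫ p))
    (by refine pullback.condition.trans ?_; simp only [Category.assoc]
        exact congrArg _ pullback.condition)

end

theorem mono_prod_lift_pullback_snd_of_comp_eq_fst {C : Type*} [Category C]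
    {X Y Z W : C} {f : X ⟶ Z} {g : Y ⟶ Z} [HasPullback f g]
    [HasBinaryProduct W Y] [HasBinaryProduct X Y]
    (φ : pullback f g ⟶ W) (k : W ⟶ X) (hφ : φ ≫ k = pullback.fst f g) :
    Mono (prod.lift φ (pullback.snd f g)) :=
  mono_of_mono_fac (show prod.lift φ (pullback.snd f g) ≫ prod.map k (𝟙 Y) =
      prod.lift (pullback.fst f g) (pullback.snd f g) by ext <;> simp [hφ])

theorem descent_pair_mono_general {C : Type*} [Category C] [HasPullbacks C] [HasBinaryProducts C]
    {E B X : C} (p : E ⟶ B) (γ : X ⟶ E)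
    (ξ : pullback p (γ ≫ p) ⟶ X)
    (hslice : ξ ≫ γ = pullback.fst p (γ ≫ p)) :
    Mono (prod.lift ξ (pullback.snd p (γ ≫ p))) :=
  mono_prod_lift_pullback_snd_of_comp_eq_fst ξ γ hslice

/-- for descent data `ξ : T^p γ → γ` relative to `p` (i.e. `ξ` is a slice
morphism with `ξ ∘ η^p_γ = id` and `ξ ∘ T^p ξ = ξ ∘ μ^p_γ`), the pair
`⟨ξ, π₂⟩ : E ×_B X ⟶ X × X` is a monomorphism. -/
theorem descent_pair_mono {C : Type*} [Category C] [HasPullbacks C] [HasBinaryProducts C]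
    {E B X : C} (p : E ⟶ B) (γ : X ⟶ E)
    (ξ : pullback p (γ ≫ p) ⟶ X)
    (hslice : ξ ≫ γ = pullback.fst p (γ ≫ p))
    (hunit : etaP p γ ≫ ξ = 𝟙 X)
    (hassoc : Tmap p ξ hslice ≫ ξ = muP p γ ≫ ξ) :
    Mono (prod.lift ξ (pullback.snd p (γ ≫ p))) :=
  descent_pair_mono_general p γ ξ hslice
end

section
/- In a topos, given p : E → B and descent data (γ, ξ) for γ : C → E relative to p, the pair ⟨ξ, π₂^{p∘γ}⟩ : E×_B C → C × C is an equivalence relation on C: it is monic, reflexive (via the unit η^p_γ), symmetric (via the involution ⟨γ∘π₂, ξ⟩), and transitive (via the multiplication μ^p_γ). -/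
/-!
On generalized elements, `T^p X` consists of pairs `(e, x)` with `p e = p (γ x)`, and
`ξ (e, x)` is a point over `e`. The pair `⟨ξ, π₂⟩` is monic because `e = γ (ξ (e, x))`.
The unit law reads `ξ (γ x, x) = x` and the associativity law reads the cocycle identity
`ξ (e, ξ (e', x)) = ξ (e, x)` for `p e = p e'`. The cocycle identity is transitivity, and with
`e' = γ x` it gives symmetry: `ξ (γ x, ξ (e, x)) = ξ (γ x, x) = x`.
-/

open CategoryTheory Limits

/-- A subobject classifier: a morphism `truth : ⊤ ⟶ Ω` such that every monomorphism
is a pullback of `truth` along a unique characteristic map. -/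
structure Classifier (C : Type*) [Category C] [HasTerminal C] where
  Ω : C
  truth : ⊤_ C ⟶ Ω
  χ : ∀ {U X : C} (m : U ⟶ X), Mono m → (X ⟶ Ω)
  isPullback : ∀ {U X : C} (m : U ⟶ X) (hm : Mono m),
    IsPullback m (terminal.from U) (χ m hm) truth
  uniq : ∀ {U X : C} (m : U ⟶ X) (hm : Mono m) (χ' : X ⟶ Ω),
    IsPullback m (terminal.from U) χ' truth → χ' = χ m hm

section

variable {C : Type*} [Category C] [HasPullbacks C] {E B X : C} (p : E ⟶ B) (γ : X ⟶ E)

theorem comp_etaP {W : C} (f : W ⟶ X) :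
    f ≫ etaP p γ = pullback.lift (f ≫ γ) f (Category.assoc _ _ _) := by
  apply pullback.hom_ext <;>
    simp only [etaP, Category.assoc, pullback.lift_fst, pullback.lift_snd, Category.comp_id]

theorem pullback_lift_comp_Tmap {W Y : C} {γY : Y ⟶ E} (φ : X ⟶ Y) (hφ : φ ≫ γY = γ)
    (e : W ⟶ E) (w : W ⟶ X) (h : e ≫ p = w ≫ γ ≫ p) :
    pullback.lift e w h ≫ Tmap p φ hφ =
      pullback.lift e (w ≫ φ) (by simp only [h, Category.assoc, reassoc_of% hφ]) := by
  apply pullback.hom_ext <;>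
    simp only [Tmap, Category.assoc, pullback.lift_fst, pullback.lift_snd, pullback.lift_snd_assoc]

theorem pullback_lift_comp_muP {W : C} (e : W ⟶ E) (w : W ⟶ pullback p (γ ≫ p))
    (h : e ≫ p = w ≫ pullback.fst p (γ ≫ p) ≫ p) :
    pullback.lift e w h ≫ muP p γ =
      pullback.lift e (w ≫ pullback.snd p (γ ≫ p))
        (by simp only [h, Category.assoc, pullback.condition]) := by
  apply pullback.hom_ext <;>
    simp only [muP, Category.assoc, pullback.lift_fst, pullback.lift_snd, pullback.lift_snd_assoc]

end

theorem mono_prod_lift_of_comp_eq_fst {C : Type*} [Category C] [HasPullbacks C]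
    [HasBinaryProducts C] {E B X Y : C} {f : E ⟶ B} {g : Y ⟶ B} {γ : X ⟶ E}
    (ξ : pullback f g ⟶ X) (hslice : ξ ≫ γ = pullback.fst f g) :
    Mono (prod.lift ξ (pullback.snd f g)) where
  right_cancellation u v h := by
    have hξ : u ≫ ξ = v ≫ ξ := by
      simpa only [Category.assoc, prod.lift_fst] using congrArg (· ≫ prod.fst) h
    have hsnd : u ≫ pullback.snd f g = v ≫ pullback.snd f g := by
      simpa only [Category.assoc, prod.lift_snd] using congrArg (· ≫ prod.snd) h
    refine pullback.hom_ext ?_ hsnd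
    rw [← hslice, reassoc_of% hξ]

section Descent

variable {C : Type*} [Category C] [HasPullbacks C] {E B X : C} {p : E ⟶ B} {γ : X ⟶ E}
  {ξ : pullback p (γ ≫ p) ⟶ X} (hslice : ξ ≫ γ = pullback.fst p (γ ≫ p))
include hslice

theorem descent_cocycle {W : C} (hassoc : Tmap p ξ hslice ≫ ξ = muP p γ ≫ ξ)
    (e : W ⟶ E) (w : W ⟶ pullback p (γ ≫ p)) (h : e ≫ p = w ≫ pullback.fst p (γ ≫ p) ≫ p) :
    pullback.lift e (w ≫ ξ) (by simp only [h, Category.assoc, reassoc_of% hslice]) ≫ ξ =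
      pullback.lift e (w ≫ pullback.snd p (γ ≫ p))
        (by simp only [h, Category.assoc, pullback.condition]) ≫ ξ := by
  rw [← pullback_lift_comp_Tmap p _ ξ hslice e w, ← pullback_lift_comp_muP p γ e w h,
    Category.assoc, Category.assoc, hassoc]

theorem descent_symm (hunit : etaP p γ ≫ ξ = 𝟙 X)
    (hassoc : Tmap p ξ hslice ≫ ξ = muP p γ ≫ ξ) :
    pullback.lift (pullback.snd p (γ ≫ p) ≫ γ) ξ
        (by rw [Category.assoc, ← pullback.condition, ← Category.assoc, hslice]) ≫ ξ =
      pullback.snd p (γ ≫ p) := by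
  have := descent_cocycle hslice hassoc (pullback.snd p (γ ≫ p) ≫ γ) (𝟙 _)
    (by simp only [Category.id_comp, Category.assoc, pullback.condition])
  simp only [Category.id_comp] at this
  rw [this, ← comp_etaP, Category.assoc, hunit, Category.comp_id]

theorem descent_trans (hassoc : Tmap p ξ hslice ≫ ξ = muP p γ ≫ ξ) {W : C}
    (π₁ π₂ : W ⟶ pullback p (γ ≫ p)) (hπ : π₁ ≫ pullback.snd p (γ ≫ p) = π₂ ≫ ξ) :
    pullback.lift (π₁ ≫ pullback.fst p (γ ≫ p)) (π₂ ≫ pullback.snd p (γ ≫ p))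
        (by simp only [Category.assoc, pullback.condition, reassoc_of% hπ,
          reassoc_of% hslice]) ≫ ξ =
      π₁ ≫ ξ := by
  have h : (π₁ ≫ pullback.fst p (γ ≫ p)) ≫ p = π₂ ≫ pullback.fst p (γ ≫ p) ≫ p := by
    simp only [Category.assoc, pullback.condition, reassoc_of% hπ, reassoc_of% hslice]
  rw [← descent_cocycle hslice hassoc _ π₂ h]
  congr 1
  exact pullback.hom_ext (pullback.lift_fst _ _ _) ((pullback.lift_snd _ _ _).trans hπ.symm)

end Descent

/-- in a topos, the pair `⟨ξ, π₂⟩` associated with descent data `(γ, ξ)`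
is an equivalence relation on `X`: it is monic, reflexive via the unit `η^p_γ`,
symmetric via the involution `⟨γ ∘ π₂, ξ⟩`, and transitive via `μ^p_γ`. -/
theorem descent_pair_is_equivalence_relation
    {C : Type*} [Category C] [HasFiniteLimits C]
    {E B X : C} (p : E ⟶ B) (γ : X ⟶ E)
    (ξ : pullback p (γ ≫ p) ⟶ X)
    (hslice : ξ ≫ γ = pullback.fst p (γ ≫ p))
    (hunit : etaP p γ ≫ ξ = 𝟙 X)
    (hassoc : Tmap p ξ hslice ≫ ξ = muP p γ ≫ ξ) :
    Mono (prod.lift ξ (pullback.snd p (γ ≫ p))) ∧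
    (etaP p γ ≫ ξ = 𝟙 X ∧ etaP p γ ≫ pullback.snd p (γ ≫ p) = 𝟙 X) ∧
    (pullback.lift (pullback.snd p (γ ≫ p) ≫ γ) ξ
        (by simp only [Category.assoc, ← pullback.condition]
            rw [← Category.assoc, hslice]) ≫ ξ = pullback.snd p (γ ≫ p) ∧
      pullback.lift (pullback.snd p (γ ≫ p) ≫ γ) ξ
        (by simp only [Category.assoc, ← pullback.condition]
            rw [← Category.assoc, hslice]) ≫ pullback.snd p (γ ≫ p) = ξ) ∧
    (∃ t : pullback (pullback.snd p (γ ≫ p)) ξ ⟶ pullback p (γ ≫ p),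
      t ≫ ξ = pullback.fst (pullback.snd p (γ ≫ p)) ξ ≫ ξ ∧
      t ≫ pullback.snd p (γ ≫ p) =
        pullback.snd (pullback.snd p (γ ≫ p)) ξ ≫ pullback.snd p (γ ≫ p)) :=
  ⟨mono_prod_lift_of_comp_eq_fst ξ hslice, ⟨hunit, pullback.lift_snd _ _ _⟩,
    ⟨descent_symm hslice hunit hassoc, pullback.lift_snd _ _ _⟩,
    ⟨_, descent_trans hslice hassoc _ _ pullback.condition, pullback.lift_snd _ _ _⟩⟩
end

section
/- In a topos, consider a commutative diagram of two adjacent squares (1) and (2) sharing a common edge, where the bottom-left horizontal arrow is an epimorphism. If the outer rectangle (1)+(2) and the left square (1) are both pullbacks, then the right square (2) is a pullback. -/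
/-!
Let `k : Y ⟶ Z ×_{Z'} Y'` be the comparison map of square (2). By pasting, pulling `k` back along
`b₁` gives the identity of `X`, and in a topos pulling back along an epimorphism reflects
isomorphisms: `k` is epi because `t₁ ≫ k` is a pullback of `b₁`, `k` is mono because two maps
that `k` identifies agree after an epimorphic pullback of `b₁`, and a topos is balanced.

Everything rests on the stability of epimorphisms under pullback. Via the graph of `v`, a pullback
of `b` along `v` is a pullback of `Y ◁ b` (epi, as `Y ⊗ -` is a left adjoint) along a mono. Along
a mono `m` it holds because pulling subobjects back along an epi `f` is injective (it is `f ≫ -`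
on characteristic maps): the equalizer of two maps that agree on `f⁻¹(m)` has the same pullback
as `m`, so it is all of `m`.
-/
open CategoryTheory Limits

theorem Classifier.hasSubobjectClassifier {C : Type*} [Category C] [HasTerminal C]
    (cls : _root_.Classifier C) : HasSubobjectClassifier C :=
  ⟨⟨.mkOfTerminalΩ₀ (⊤_ C) terminalIsTerminal cls.Ω cls.truth (fun m => cls.χ m ‹_›)
    (fun m => cls.isPullback m _) (fun m => cls.uniq m _)⟩⟩

namespace CategoryTheory

open MonoidalCategory CartesianMonoidalCategory

variable {C : Type*} [Category C]

section Cartesian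

variable [CartesianMonoidalCategory C]

theorem isPullback_whiskerLeft_snd (Y : C) {X' Y' : C} (b : X' ⟶ Y') :
    IsPullback (Y ◁ b) (snd Y X') (snd Y Y') b := by
  refine IsPullback.of_isLimit (PullbackCone.IsLimit.mk (by simp)
    (fun s => lift (s.fst ≫ fst _ _) s.snd) (fun s => ?_) (fun s => by simp)
    (fun s l hl hr => ?_))
  · ext
    · simp
    · simp [s.condition]
  · ext
    · simp [← hl]
    · simp [← hr]

theorem IsPullback.lift_graph {X Y X' Y' : C} {t : X ⟶ Y} {u : X ⟶ X'} {v : Y ⟶ Y'}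
    {b : X' ⟶ Y'} (h : IsPullback t u v b) :
    IsPullback t (CartesianMonoidalCategory.lift t u)
      (CartesianMonoidalCategory.lift (𝟙 Y) v) (Y ◁ b) :=
  IsPullback.of_bot (by simpa using h) (by ext <;> simp [h.w]) (isPullback_whiskerLeft_snd Y b)

end Cartesian

section Topos

variable [HasPullbacks C] [HasSubobjectClassifier C]

theorem Subobject.pullback_obj_injective_of_epi {A B : C} (f : A ⟶ B) [Epi f] :
    Function.Injective (Subobject.pullback f).obj := by
  obtain ⟨𝒞⟩ := HasSubobjectClassifier.exists_classifier (C := C)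
  let e := 𝒞.representableBy
  intro S T hST
  obtain ⟨φ, rfl⟩ := e.homEquiv.surjective S
  obtain ⟨ψ, rfl⟩ := e.homEquiv.surjective T
  have : f ≫ φ = f ≫ ψ := e.homEquiv.injective (by rwa [e.homEquiv_comp, e.homEquiv_comp])
  rw [(cancel_epi f).1 this]

theorem epi_of_isPullback_of_mono_of_epi [HasEqualizers C] {P M A B : C} {g : P ⟶ M}
    {p : P ⟶ A} {m : M ⟶ B} {f : A ⟶ B} [Mono m] [Epi f] (h : IsPullback g p m f) : Epi g := by
  refine ⟨fun {D} x y hxy => ?_⟩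
  have := h.mono_snd_of_mono
  let e := equalizer.ι x y
  have hle : Subobject.mk m ≤ Subobject.mk (e ≫ m) := by
    suffices (Subobject.pullback f).obj (Subobject.mk m) ≤
        (Subobject.pullback f).obj (Subobject.mk (e ≫ m)) from
      (Subobject.pullback_obj_injective_of_epi f (le_antisymm
        ((Subobject.pullback f).monotone (Subobject.mk_le_mk_of_comm _ rfl)) this)).ge
    rw [Subobject.pullback_obj_mk h]
    refine Subobject.le_of_factors ((pullback_factors_iff _ _ _).2 ?_)
    rw [← Subobject.underlyingIso_hom_comp_eq_mk, Category.assoc, ← h.w]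
    exact (Subobject.mk_factors_iff _ _).2
      ⟨(Subobject.underlyingIso p).hom ≫ equalizer.lift g hxy, by simp [e]⟩
  have hsplit : Subobject.ofMkLEMk _ _ hle ≫ e = 𝟙 M := by
    rw [← cancel_mono m, Category.assoc, Subobject.ofMkLEMk_comp, Category.id_comp]
  have : IsSplitEpi e := IsSplitEpi.mk' ⟨_, hsplit⟩
  exact (cancel_epi e).1 (equalizer.condition x y)

theorem epi_of_isPullback_of_epi [HasEqualizers C] [CartesianMonoidalCategory C]
    [MonoidalClosed C] {X Y X' Y' : C} {t : X ⟶ Y} {u : X ⟶ X'} {v : Y ⟶ Y'} {b : X' ⟶ Y'}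
    [Epi b] (h : IsPullback t u v b) : Epi t :=
  have : Epi (Y ◁ b) := (tensorLeft Y).map_epi b
  epi_of_isPullback_of_mono_of_epi h.lift_graph

theorem mono_of_isPullback_of_epi [HasEqualizers C] [CartesianMonoidalCategory C]
    [MonoidalClosed C] {X Y P X' Y' : C} {t : X ⟶ Y} {u : X ⟶ X'} (k : Y ⟶ P) {q : P ⟶ Y'}
    {b : X' ⟶ Y'} [Epi b] (hY : IsPullback t u (k ≫ q) b) (hP : IsPullback (t ≫ k) u q b) :
    Mono k := by
  refine ⟨fun {T} (a a' : T ⟶ Y) haa' => ?_⟩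
  have hπ := IsPullback.of_hasPullback (a ≫ k ≫ q) b
  have : Epi (pullback.fst (a ≫ k ≫ q) b) := epi_of_isPullback_of_epi hπ
  have w : (pullback.fst _ _ ≫ a) ≫ k ≫ q = pullback.snd (a ≫ k ≫ q) b ≫ b := by
    rw [Category.assoc, hπ.w]
  have w' : (pullback.fst _ _ ≫ a') ≫ k ≫ q = pullback.snd (a ≫ k ≫ q) b ≫ b := by
    rw [Category.assoc, ← reassoc_of% haa', hπ.w]
  have hlift : hY.lift _ _ w = hY.lift _ _ w' :=
    hP.hom_ext (by simp [haa']) (by simp)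
  rw [← cancel_epi (pullback.fst (a ≫ k ≫ q) b), ← hY.lift_fst _ _ w, hlift, hY.lift_fst]

theorem isIso_of_isPullback_of_epi [HasEqualizers C] [CartesianMonoidalCategory C]
    [MonoidalClosed C] {X Y P X' Y' : C} {t : X ⟶ Y} {u : X ⟶ X'} (k : Y ⟶ P) {q : P ⟶ Y'}
    {b : X' ⟶ Y'} [Epi b] (hY : IsPullback t u (k ≫ q) b) (hP : IsPullback (t ≫ k) u q b) :
    IsIso k :=
  have : Epi (t ≫ k) := epi_of_isPullback_of_epi hP
  have : Epi k := epi_of_epi t k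
  have : Mono k := mono_of_isPullback_of_epi k hY hP
  isIso_of_mono_of_epi k

end Topos

end CategoryTheory

/-- in a topos, given two adjacent commuting squares `(1)` (left) and
`(2)` (right) whose common bottom-left edge is an epimorphism, if the outer rectangle
`(1)+(2)` and the left square `(1)` are pullbacks, then the right square `(2)` is a
pullback. -/
theorem pullback_cancel_of_epi
    {C : Type*} [Category C] [HasFiniteLimits C] [CartesianMonoidalCategory C]
    [MonoidalClosed C] (cls : _root_.Classifier C)
    {X Y Z X' Y' Z' : C}
    (t₁ : X ⟶ Y) (t₂ : Y ⟶ Z) (u : X ⟶ X') (v : Y ⟶ Y') (w : Z ⟶ Z')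
    (b₁ : X' ⟶ Y') (b₂ : Y' ⟶ Z')
    [Epi b₁]
    (h1 : IsPullback t₁ u v b₁)
    (h12 : IsPullback (t₁ ≫ t₂) u w (b₁ ≫ b₂)) :
    IsPullback t₂ v w b₂ := by
  have := cls.hasSubobjectClassifier
  have : Epi t₁ := epi_of_isPullback_of_epi h1
  have comm : t₂ ≫ w = v ≫ b₂ := by
    rw [← cancel_epi t₁, ← Category.assoc, h12.w, ← reassoc_of% h1.w]
  let k := pullback.lift t₂ v comm
  have hP : IsPullback (t₁ ≫ k) u (pullback.snd w b₂) b₁ :=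
    .of_right (by rwa [Category.assoc, pullback.lift_fst])
      (by rw [Category.assoc, pullback.lift_snd, h1.w]) (.of_hasPullback w b₂)
  have : IsIso k := isIso_of_isPullback_of_epi k (by rwa [pullback.lift_snd]) hP
  exact .of_iso_pullback ⟨comm⟩ (asIso k) (pullback.lift_fst _ _ _) (pullback.lift_snd _ _ _)
end

section
/- In a topos, let p : E → B, γ : C → E, and let (γ, ξ) be descent data for γ relative to p. Let c : C → H be the coequalizer of ξ and π₂^{p∘γ} : E×_B C → C, and let α : H → B be the unique map with α ∘ c = p ∘ γ. Then the square with top c, left γ, right α, bottom p is a pullback. -/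
/-! The relation `R = ⟨ξ, π₂⟩ : E ×_B X ↣ X ⊗ X` is reflexive by the unit law, and the cocycle
condition gives `(x, ξ t) ∈ R ↔ (x, π₂ t) ∈ R`. So the classifying map of `R`, curried in its
second variable, factors through the coequalizer `c`: from `c a = c b` we get `(a, b) ∈ R`, and if
also `γ a = γ b` then `a = b`. Thus `⟨γ, c⟩ : X ↣ E ⊗ H` is monic. Along the epimorphism `E ◁ c`,
both `⟨γ, c⟩` and `E ×_B H ↣ E ⊗ H` pull back to `E ×_B X`, so they have the same classifying map
and are the same subobject of `E ⊗ H`, which is the pullback property. -/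

open CategoryTheory Limits

open MonoidalCategory CartesianMonoidalCategory MonoidalClosed

namespace Classifier

variable {C : Type*} [Category C] [HasTerminal C] (cls : _root_.Classifier C)

instance mono_truth : Mono cls.truth := terminalIsTerminal.mono_from _

lemma comp_χ_eq_truth_iff {U Y T : C} (m : U ⟶ Y) (hm : Mono m) (y : T ⟶ Y) :
    y ≫ cls.χ m hm = terminal.from T ≫ cls.truth ↔ ∃ u, u ≫ m = y := by
  constructor
  · intro h
    exact ⟨(cls.isPullback m hm).lift y _ h, (cls.isPullback m hm).lift_fst _ _ _⟩
  · rintro ⟨u, rfl⟩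
    rw [Category.assoc, (cls.isPullback m hm).w, ← Category.assoc, terminal.comp_from]

lemma eq_χ_of_forall {U Y : C} (m : U ⟶ Y) (hm : Mono m) (φ : Y ⟶ cls.Ω)
    (h : ∀ {T : C} (y : T ⟶ Y), y ≫ φ = terminal.from T ≫ cls.truth ↔ ∃ u, u ≫ m = y) :
    φ = cls.χ m hm := by
  have lift (s : PullbackCone φ cls.truth) : ∃ u, u ≫ m = s.fst :=
    (h s.fst).1 (by rw [s.condition, terminal.hom_ext s.snd])
  refine cls.uniq m hm φ (IsPullback.of_isLimit' ⟨(h m).2 ⟨𝟙 U, Category.id_comp m⟩⟩ ?_)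
  refine PullbackCone.IsLimit.mk _ (fun s => (lift s).choose) (fun s => (lift s).choose_spec)
    (fun s => terminal.hom_ext _ _) (fun s l hl _ => ?_)
  rw [← cancel_mono m, hl, (lift s).choose_spec]

lemma exists_eq_χ [HasPullbacks C] {Y : C} (φ : Y ⟶ cls.Ω) :
    ∃ (U : C) (m : U ⟶ Y) (hm : Mono m), φ = cls.χ m hm := by
  refine ⟨_, pullback.fst φ cls.truth, inferInstance, cls.eq_χ_of_forall _ _ φ fun y => ⟨?_, ?_⟩⟩
  · intro hy
    exact ⟨pullback.lift y _ hy, pullback.lift_fst _ _ _⟩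
  · rintro ⟨u, rfl⟩
    rw [Category.assoc, pullback.condition, ← Category.assoc]
    congr 1
    exact terminal.hom_ext _ _

lemma hom_ext [HasPullbacks C] {Y : C} {φ ψ : Y ⟶ cls.Ω}
    (h : ∀ {T : C} (y : T ⟶ Y),
      y ≫ φ = terminal.from T ≫ cls.truth ↔ y ≫ ψ = terminal.from T ≫ cls.truth) :
    φ = ψ := by
  obtain ⟨U, m, hm, rfl⟩ := cls.exists_eq_χ φ
  exact (cls.eq_χ_of_forall m hm ψ fun y => (h y).symm.trans (cls.comp_χ_eq_truth_iff m hm y)).symm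

end Classifier

section Cartesian

variable {C : Type*} [Category C] [CartesianMonoidalCategory C]

lemma CategoryTheory.CartesianMonoidalCategory.lift_eq_lift_iff {T A Y : C} {a a' : T ⟶ A}
    {b b' : T ⟶ Y} :
    lift a b = lift a' b' ↔ a = a' ∧ b = b' := by
  refine ⟨fun h => ⟨?_, ?_⟩, fun ⟨ha, hb⟩ => ha ▸ hb ▸ rfl⟩
  · simpa using congr($h ≫ fst _ _)
  · simpa using congr($h ≫ snd _ _)

lemma CategoryTheory.CartesianMonoidalCategory.mono_lift_of_forall {R A Y : C} {f : R ⟶ A}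
    {g : R ⟶ Y} (h : ∀ {T : C} {a b : T ⟶ R}, a ≫ f = b ≫ f → a ≫ g = b ≫ g → a = b) :
    Mono (lift f g) :=
  ⟨fun a b hab => by
    obtain ⟨hf, hg⟩ := lift_eq_lift_iff.1 (by simpa only [comp_lift] using hab)
    exact h hf hg⟩

namespace Classifier

variable [HasTerminal C] (cls : _root_.Classifier C)

lemma lift_comp_χ_eq_truth_iff {R A Y T : C} {f : R ⟶ A} {g : R ⟶ Y} (hfg : Mono (lift f g))
    (a : T ⟶ A) (b : T ⟶ Y) :
    lift a b ≫ cls.χ _ hfg = terminal.from T ≫ cls.truth ↔ ∃ r, r ≫ f = a ∧ r ≫ g = b := by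
  simp only [comp_χ_eq_truth_iff, comp_lift, lift_eq_lift_iff]

lemma hom_ext_of_lift [HasPullbacks C] {A Y : C} {φ ψ : A ⊗ Y ⟶ cls.Ω}
    (h : ∀ {T : C} (a : T ⟶ A) (b : T ⟶ Y),
      lift a b ≫ φ = terminal.from T ≫ cls.truth ↔ lift a b ≫ ψ = terminal.from T ≫ cls.truth) :
    φ = ψ := by
  refine cls.hom_ext fun y => ?_
  rw [← Category.comp_id y, ← lift_fst_snd, comp_lift]
  exact h _ _

end Classifier

variable [MonoidalClosed C]

lemma lift_comp_eq_of_coequalizes {A Y Z P H : C} {f g : P ⟶ Y} {c : Y ⟶ H}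
    {w : f ≫ c = g ≫ c} (hc : IsColimit (Cofork.ofπ c w)) {φ : A ⊗ Y ⟶ Z}
    (hφ : A ◁ f ≫ φ = A ◁ g ≫ φ) {T : C} {a b : T ⟶ Y} (hab : a ≫ c = b ≫ c) (x : T ⟶ A) :
    lift x a ≫ φ = lift x b ≫ φ := by
  obtain ⟨d, hd⟩ := Cofork.IsColimit.desc' hc (curry φ)
    (by rw [← curry_natural_left, ← curry_natural_left, hφ])
  have hcurry : a ≫ curry φ = b ≫ curry φ := by
    rw [← hd, Cofork.π_ofπ, reassoc_of% hab]
  have hwhisker : A ◁ a ≫ φ = A ◁ b ≫ φ :=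
    curry_injective (by rw [curry_natural_left, curry_natural_left, hcurry])
  simpa only [← Category.assoc, lift_whiskerLeft, Category.id_comp]
    using congr(lift x (𝟙 T) ≫ $hwhisker)

end Cartesian

section Descent

variable {C : Type*} [Category C] [HasPullbacks C] {E B X : C} {p : E ⟶ B} {γ : X ⟶ E}
  {ξ : pullback p (γ ≫ p) ⟶ X}

lemma etaP_fst : etaP p γ ≫ pullback.fst p (γ ≫ p) = γ := pullback.lift_fst _ _ _

lemma etaP_snd : etaP p γ ≫ pullback.snd p (γ ≫ p) = 𝟙 X := pullback.lift_snd _ _ _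

lemma descent_cocycle_s7 (hslice : ξ ≫ γ = pullback.fst p (γ ≫ p))
    (hassoc : Tmap p ξ hslice ≫ ξ = muP p γ ≫ ξ) {T : C} {r r' t : T ⟶ pullback p (γ ≫ p)}
    (hfst : r ≫ pullback.fst _ _ = r' ≫ pullback.fst _ _) (hr : r ≫ pullback.snd _ _ = t ≫ ξ)
    (hr' : r' ≫ pullback.snd _ _ = t ≫ pullback.snd _ _) :
    r ≫ ξ = r' ≫ ξ := by
  let u : T ⟶ pullback p (pullback.fst p (γ ≫ p) ≫ p) :=
    pullback.lift (r ≫ pullback.fst _ _) t (by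
      rw [Category.assoc, pullback.condition, reassoc_of% hr, reassoc_of% hslice,
        pullback.condition])
  have hT : u ≫ Tmap p ξ hslice = r :=
    pullback.hom_ext (by simp only [u, Tmap, Category.assoc, pullback.lift_fst])
      (by simp only [u, Tmap, Category.assoc, pullback.lift_snd, pullback.lift_snd_assoc, hr])
  have hμ : u ≫ muP p γ = r' :=
    pullback.hom_ext (by simp only [u, muP, Category.assoc, pullback.lift_fst, hfst])
      (by simp only [u, muP, Category.assoc, pullback.lift_snd, pullback.lift_snd_assoc, hr'])
  rw [← hT, ← hμ, Category.assoc, hassoc, Category.assoc]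

variable [CartesianMonoidalCategory C]

lemma mono_lift_snd_of_comp_eq_fst (hslice : ξ ≫ γ = pullback.fst p (γ ≫ p)) :
    Mono (lift ξ (pullback.snd p (γ ≫ p))) :=
  mono_lift_of_forall fun hξ hsnd => pullback.hom_ext (by rw [← hslice, reassoc_of% hξ]) hsnd

lemma descent_whiskerLeft_χ_eq [HasTerminal C] (cls : _root_.Classifier C)
    (hslice : ξ ≫ γ = pullback.fst p (γ ≫ p)) (hassoc : Tmap p ξ hslice ≫ ξ = muP p γ ≫ ξ) :
    X ◁ ξ ≫ cls.χ _ (mono_lift_snd_of_comp_eq_fst hslice)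
      = X ◁ pullback.snd p (γ ≫ p) ≫ cls.χ _ (mono_lift_snd_of_comp_eq_fst hslice) := by
  refine cls.hom_ext_of_lift fun x t => ?_
  simp only [← Category.assoc, lift_whiskerLeft, cls.lift_comp_χ_eq_truth_iff]
  constructor
  · rintro ⟨r, rfl, hr⟩
    refine ⟨pullback.lift (r ≫ pullback.fst _ _) (t ≫ pullback.snd _ _) ?_,
      (descent_cocycle_s7 hslice hassoc (pullback.lift_fst _ _ _).symm hr
        (pullback.lift_snd _ _ _)).symm, pullback.lift_snd _ _ _⟩
    simp only [Category.assoc, pullback.condition, reassoc_of% hr, reassoc_of% hslice]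
  · rintro ⟨r', rfl, hr'⟩
    refine ⟨pullback.lift (r' ≫ pullback.fst _ _) (t ≫ ξ) ?_,
      descent_cocycle_s7 hslice hassoc (pullback.lift_fst _ _ _) (pullback.lift_snd _ _ _) hr',
      pullback.lift_snd _ _ _⟩
    simp only [Category.assoc, pullback.condition, reassoc_of% hr', reassoc_of% hslice]

lemma descent_ext [HasTerminal C] [MonoidalClosed C] (cls : _root_.Classifier C)
    (hslice : ξ ≫ γ = pullback.fst p (γ ≫ p)) (hunit : etaP p γ ≫ ξ = 𝟙 X)
    (hassoc : Tmap p ξ hslice ≫ ξ = muP p γ ≫ ξ) {H : C} {c : X ⟶ H}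
    {hw : ξ ≫ c = pullback.snd p (γ ≫ p) ≫ c} (hc : IsColimit (Cofork.ofπ c hw))
    {T : C} {a b : T ⟶ X} (hγ : a ≫ γ = b ≫ γ) (hac : a ≫ c = b ≫ c) : a = b := by
  have related_self : lift a a ≫ cls.χ _ (mono_lift_snd_of_comp_eq_fst hslice)
      = terminal.from T ≫ cls.truth :=
    (cls.lift_comp_χ_eq_truth_iff _ a a).2
      ⟨a ≫ etaP p γ, by rw [Category.assoc, hunit, Category.comp_id],
        by rw [Category.assoc, etaP_snd, Category.comp_id]⟩
  rw [lift_comp_eq_of_coequalizes hc (descent_whiskerLeft_χ_eq cls hslice hassoc) hac a,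
    cls.lift_comp_χ_eq_truth_iff] at related_self
  obtain ⟨r, hrξ, hrsnd⟩ := related_self
  have hr : r = b ≫ etaP p γ :=
    pullback.hom_ext (by rw [Category.assoc, etaP_fst, ← hslice, reassoc_of% hrξ, hγ])
      (by rw [Category.assoc, etaP_snd, Category.comp_id, hrsnd])
  rw [← hrξ, hr, Category.assoc, hunit, Category.comp_id]

lemma descent_exists_lift [HasTerminal C] [MonoidalClosed C] (cls : _root_.Classifier C)
    (hslice : ξ ≫ γ = pullback.fst p (γ ≫ p)) (hunit : etaP p γ ≫ ξ = 𝟙 X)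
    (hassoc : Tmap p ξ hslice ≫ ξ = muP p γ ≫ ξ) {H : C} {c : X ⟶ H}
    {hw : ξ ≫ c = pullback.snd p (γ ≫ p) ≫ c} (hc : IsColimit (Cofork.ofπ c hw))
    {α : H ⟶ B} (hα : c ≫ α = γ ≫ p) {T : C} (h : T ⟶ H) (e : T ⟶ E) (he : h ≫ α = e ≫ p) :
    ∃ x, x ≫ c = h ∧ x ≫ γ = e := by
  have hQ : Mono (lift (pullback.fst p α) (pullback.snd p α)) :=
    mono_lift_of_forall pullback.hom_ext
  have hG : Mono (lift γ c) := mono_lift_of_forall (descent_ext cls hslice hunit hassoc hc)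
  have hχ : cls.χ _ hQ = cls.χ _ hG := by
    have : Epi c := epi_of_isColimit_cofork hc
    have : Epi (E ◁ c) := (tensorLeft E).map_epi c
    refine (cancel_epi (E ◁ c)).1 (cls.hom_ext_of_lift fun e x => ?_)
    simp only [← Category.assoc, lift_whiskerLeft, cls.lift_comp_χ_eq_truth_iff]
    constructor
    · rintro ⟨u, rfl, hu⟩
      refine ⟨pullback.lift (u ≫ pullback.fst p α) x ?_ ≫ ξ, ?_, ?_⟩
      · rw [Category.assoc, pullback.condition, ← hα, reassoc_of% hu]
      · rw [Category.assoc, hslice, pullback.lift_fst]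
      · rw [Category.assoc, hw, pullback.lift_snd_assoc]
    · rintro ⟨x', rfl, hx'⟩
      exact ⟨pullback.lift (x' ≫ γ) (x ≫ c) (by rw [← hx', Category.assoc, Category.assoc, hα]),
        pullback.lift_fst _ _ _, pullback.lift_snd _ _ _⟩
  have he' : lift e h ≫ cls.χ _ hQ = terminal.from T ≫ cls.truth :=
    (cls.lift_comp_χ_eq_truth_iff hQ e h).2
      ⟨pullback.lift e h he.symm, pullback.lift_fst _ _ _, pullback.lift_snd _ _ _⟩
  obtain ⟨x, hxγ, hxc⟩ := (cls.lift_comp_χ_eq_truth_iff hG e h).1 (hχ ▸ he')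
  exact ⟨x, hxc, hxγ⟩

end Descent

/-- in a topos, let `(γ, ξ)` be descent data for `γ : X ⟶ E` relative to
`p : E ⟶ B`, let `c : X ⟶ H` be the coequalizer of `ξ` and `π₂`, and let `α : H ⟶ B` be
the mediating map with `c ≫ α = γ ≫ p`.  Then the square with top `c`, left `γ`,
right `α` and bottom `p` is a pullback. -/
theorem descent_coequalizer_square_isPullback
    {C : Type*} [Category C] [HasFiniteLimits C] [CartesianMonoidalCategory C]
    [MonoidalClosed C] (cls : _root_.Classifier C)
    {E B X H : C} (p : E ⟶ B) (γ : X ⟶ E)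
    (ξ : pullback p (γ ≫ p) ⟶ X)
    (hslice : ξ ≫ γ = pullback.fst p (γ ≫ p))
    (hunit : etaP p γ ≫ ξ = 𝟙 X)
    (hassoc : Tmap p ξ hslice ≫ ξ = muP p γ ≫ ξ)
    (c : X ⟶ H) (hw : ξ ≫ c = pullback.snd p (γ ≫ p) ≫ c)
    (hc : IsColimit (Cofork.ofπ c hw))
    (α : H ⟶ B) (hα : c ≫ α = γ ≫ p) :
    IsPullback c γ α p := by
  have lift (s : PullbackCone α p) : ∃ x, x ≫ c = s.fst ∧ x ≫ γ = s.snd :=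
    descent_exists_lift cls hslice hunit hassoc hc hα s.fst s.snd s.condition
  refine IsPullback.of_isLimit' ⟨hα⟩ (PullbackCone.IsLimit.mk _ (fun s => (lift s).choose)
    (fun s => (lift s).choose_spec.1) (fun s => (lift s).choose_spec.2) fun s m hm₁ hm₂ => ?_)
  exact descent_ext cls hslice hunit hassoc hc (by rw [hm₂, (lift s).choose_spec.2])
    (by rw [hm₁, (lift s).choose_spec.1])
end

section
/- Let a commutative square in SET with a, r : L → (A, R) and ā, r̄ into S be given, with a rear pullback span over γ : I → L whose top arrows are a' and r', and canonical descent data ξ^τ (relative to a) and ξ^β (relative to r). If the pullback span is reachable (isomorphic to the image under the pullback functor of some σ over S), then ξ^τ and ξ^β are coherent: there exists descent data (γ, ξ) relative to s = ā∘r = r̄∘a with ξ ∘ u^{r̄}_γ = ξ^τ and ξ ∘ u^{ā}_γ = ξ^β. -/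
universe u

/-- `(W, p, q)` is a pullback of the cospan `(f, g)` in `SET`. -/
def IsSetPullback {X Y Z W : Type u} (f : X → Z) (g : Y → Z) (p : W → X) (q : W → Y) : Prop :=
  (∀ w, f (p w) = g (q w)) ∧ ∀ x y, f x = g y → ∃! w, p w = x ∧ q w = y

/-- Descent data in `SET` for `γ` relative to `p`, as a compatible family of maps
between the fibres of `γ`. -/
structure DescentFamily {E B C : Type u} (p : E → B) (γ : C → E) where
  map : ∀ (e e' : E), p e = p e' → {c : C // γ c = e} → {c : C // γ c = e'}
  refl : ∀ e (c : {c : C // γ c = e}), map e e rfl c = c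
  comp : ∀ (e e' e'' : E) (h : p e = p e') (h' : p e' = p e'') (c : {c : C // γ c = e}),
    map e' e'' h' (map e e' h c) = map e e'' (h.trans h') c

/-!
Pasting the rear-left pullback square with the front-left one exhibits `γ` as a pullback of
`σ` along `s = r̄ ∘ a`, with top arrow `r̄' ∘ a'`. Its canonical descent data `ξ` sends a point of
the fibre over `x` to the unique point of the fibre over `x'` with the same image under
`r̄' ∘ a'`. The canonical `ξᵗ` preserves `a'`, hence `r̄' ∘ a'`; the canonical `ξᵝ` preserves
`r'`, hence `ā' ∘ r' = r̄' ∘ a'`. Uniqueness then forces both to be restrictions of `ξ`.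
-/

namespace IsSetPullback

variable {X Y Z W : Type u} {f : X → Z} {g : Y → Z} {p : W → X} {q : W → Y}

theorem comp {Y' Z' : Type u} {f' : Z → Z'} {g' : Y' → Z'} {q' : Y → Y'}
    (h : IsSetPullback f g p q) (h' : IsSetPullback f' g' g q') :
    IsSetPullback (fun x => f' (f x)) g' p (fun w => q' (q w)) := by
  refine ⟨fun w => (congrArg f' (h.1 w)).trans (h'.1 (q w)), fun x y' hxy' => ?_⟩
  obtain ⟨y, ⟨hgy, hq'y⟩, hy_unique⟩ := h'.2 (f x) y' hxy'
  obtain ⟨w, ⟨hpw, hqw⟩, hw_unique⟩ := h.2 x y hgy.symm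
  refine ⟨w, ⟨hpw, (congrArg q' hqw).trans hq'y⟩, fun v ⟨hpv, hq'qv⟩ => hw_unique v ⟨hpv, ?_⟩⟩
  exact hy_unique (q v) ⟨(h.1 v).symm.trans (congrArg f hpv), hq'qv⟩

theorem existsUnique_fiber_lift (h : IsSetPullback f g p q) {x x' : X} (hx : f x = f x')
    (w : {w : W // p w = x}) : ∃! w' : {w' : W // p w' = x'}, q w' = q w := by
  have hfx' : f x' = g (q w) := hx.symm.trans ((congrArg f w.2).symm.trans (h.1 w))
  obtain ⟨v, ⟨hpv, hqv⟩, hv_unique⟩ := h.2 x' (q w) hfx'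
  exact ⟨⟨v, hpv⟩, hqv, fun w' hw' => Subtype.ext (hv_unique w' ⟨w'.2, hw'⟩)⟩

/-- Canonical descent data: a point moves to the unique point of the target fibre with the same
image under `q`. -/
noncomputable def descent (h : IsSetPullback f g p q) : DescentFamily f p where
  map _ _ hx w := (h.existsUnique_fiber_lift hx w).choose
  refl _ w := ((h.existsUnique_fiber_lift rfl w).choose_spec.2 w rfl).symm
  comp _ _ _ hx hx' w :=
    (h.existsUnique_fiber_lift (hx.trans hx') w).choose_spec.2 _
      ((h.existsUnique_fiber_lift hx' _).choose_spec.1.trans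
        (h.existsUnique_fiber_lift hx w).choose_spec.1)

theorem descent_map_eq (h : IsSetPullback f g p q) {x x' : X} (hx : f x = f x')
    (m : {w : W // p w = x} → {w : W // p w = x'}) (hm : ∀ w, q (m w) = q w) :
    h.descent.map x x' hx = m :=
  funext fun w => ((h.existsUnique_fiber_lift hx w).choose_spec.2 (m w) (hm w)).symm

end IsSetPullback

theorem reachable_implies_coherent_general
    {L A R S I J H : Type u}
    (a : L → A) (r : L → R) (rbar : A → S) (abar : R → S)
    (hcomm : ∀ l, rbar (a l) = abar (r l))
    (γ : I → L) (τ : J → A) (β : H → R) (a' : I → J) (r' : I → H)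
    (hrearL : IsSetPullback a τ γ a')
    (ξτ : DescentFamily a γ) (ξβ : DescentFamily r γ)
    (hτcan : ∀ (x x' : L) (h : a x = a x') (c : {c : I // γ c = x}),
      a' (ξτ.map x x' h c : I) = a' (c : I))
    (hβcan : ∀ (x x' : L) (h : r x = r x') (c : {c : I // γ c = x}),
      r' (ξβ.map x x' h c : I) = r' (c : I))
    (hreach : ∃ (K : Type u) (σ : K → S) (rbar' : J → K) (abar' : H → K),
      (∀ i, rbar' (a' i) = abar' (r' i)) ∧
      IsSetPullback rbar σ τ rbar' ∧
      IsSetPullback abar σ β abar') :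
    ∃ ξ : DescentFamily (fun l => rbar (a l)) γ,
      (∀ (x x' : L) (h : a x = a x'),
        ξ.map x x' (congrArg rbar h) = ξτ.map x x' h) ∧
      (∀ (x x' : L) (h : r x = r x'),
        ξ.map x x' (((hcomm x).trans (congrArg abar h)).trans (hcomm x').symm) =
          ξβ.map x x' h) := by
  obtain ⟨K, σ, rbar', abar', hcube, hfront, -⟩ := hreach
  have hpasted := hrearL.comp hfront
  refine ⟨hpasted.descent, fun x x' h => ?_, fun x x' h => ?_⟩
  · exact hpasted.descent_map_eq _ _ fun c => congrArg rbar' (hτcan x x' h c)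
  · refine hpasted.descent_map_eq _ _ fun c => ?_
    calc rbar' (a' (ξβ.map x x' h c)) = abar' (r' (ξβ.map x x' h c)) := hcube _
      _ = abar' (r' c) := congrArg abar' (hβcan x x' h c)
      _ = rbar' (a' c) := (hcube c).symm

/-- in `SET`, for a commutative square `ā ∘ r = r̄ ∘ a = s` and a rear
pullback span over `γ : I → L` with top arrows `a'`, `r'` and canonical descent data
`ξᵗ` (relative to `a`) and `ξᵝ` (relative to `r`): if the span is reachable — i.e. it
completes to a cube over some `σ : K → S` whose front and right faces are pullbacks —
then `ξᵗ` and `ξᵝ` are coherent: there is descent data `ξ` relative to `s` whose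
restrictions along `u^{r̄}` and `u^{ā}` are `ξᵗ` and `ξᵝ`. -/
theorem reachable_implies_coherent
    {L A R S I J H : Type u}
    (a : L → A) (r : L → R) (rbar : A → S) (abar : R → S)
    (hcomm : ∀ l, rbar (a l) = abar (r l))
    (γ : I → L) (τ : J → A) (β : H → R) (a' : I → J) (r' : I → H)
    (hrearL : IsSetPullback a τ γ a')
    (hrearR : IsSetPullback r β γ r')
    (ξτ : DescentFamily a γ) (ξβ : DescentFamily r γ)
    (hτcan : ∀ (x x' : L) (h : a x = a x') (c : {c : I // γ c = x}),
      a' (ξτ.map x x' h c : I) = a' (c : I))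
    (hβcan : ∀ (x x' : L) (h : r x = r x') (c : {c : I // γ c = x}),
      r' (ξβ.map x x' h c : I) = r' (c : I))
    (hreach : ∃ (K : Type u) (σ : K → S) (rbar' : J → K) (abar' : H → K),
      (∀ i, rbar' (a' i) = abar' (r' i)) ∧
      IsSetPullback rbar σ τ rbar' ∧
      IsSetPullback abar σ β abar') :
    ∃ ξ : DescentFamily (fun l => rbar (a l)) γ,
      (∀ (x x' : L) (h : a x = a x'),
        ξ.map x x' (congrArg rbar h) = ξτ.map x x' h) ∧
      (∀ (x x' : L) (h : r x = r x'),
        ξ.map x x' (((hcomm x).trans (congrArg abar h)).trans (hcomm x').symm) =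
          ξβ.map x x' h) :=
  reachable_implies_coherent_general a r rbar abar hcomm γ τ β a' r' hrearL ξτ ξβ hτcan hβcan hreach
end

section
/- In SET, given a pushout square of a : L → A and r : L → R with pushout object S, if ξ^τ (descent data relative to a) and ξ^β (descent data relative to r) for a common γ : I → L are coherent, then the coherence witness (γ, ξ) ∈ des(s) is unique. -/
/-!
Two descent families on the same fibres agree on a pair `(x, x')` exactly when their transport
maps `x ⇝ x'` coincide, and this "agreement" relation is an equivalence relation because the
transport maps compose and are invertible. The coherence conditions say that both witnesses agree
on every pair identified by `a` or by `r`, and in `SET` two points of `L` have the same image in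
the pushout only if they are joined by a zig-zag of such identifications.
-/

universe u

/-- `(S, r̄, ā)` is a pushout of the span `(a, r)` in `SET`. -/
def IsSetPushout {L A R S : Type u} (a : L → A) (r : L → R)
    (rbar : A → S) (abar : R → S) : Prop :=
  (∀ l, rbar (a l) = abar (r l)) ∧
  ∀ {T : Type u} (f : A → T) (g : R → T), (∀ l, f (a l) = g (r l)) →
    ∃! h : S → T, (∀ x, h (rbar x) = f x) ∧ (∀ y, h (abar y) = g y)

namespace DescentFamily

variable {E B C : Type u} {p : E → B} {γ : C → E}

theorem ext {ξ₁ ξ₂ : DescentFamily p γ} (h : ξ₁.map = ξ₂.map) : ξ₁ = ξ₂ := by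
  cases ξ₁; cases ξ₂; cases h; rfl

theorem map_map_symm (ξ : DescentFamily p γ) {e e' : E} (h : p e = p e')
    (c : {c : C // γ c = e}) : ξ.map e' e h.symm (ξ.map e e' h c) = c := by
  rw [ξ.comp, ξ.refl]

theorem equivalence_agree (ξ₁ ξ₂ : DescentFamily p γ) :
    Equivalence fun e e' => ∃ h : p e = p e', ξ₁.map e e' h = ξ₂.map e e' h where
  refl e := ⟨rfl, funext fun c => (ξ₁.refl e c).trans (ξ₂.refl e c).symm⟩
  symm := by
    rintro e e' ⟨h, hmap⟩
    refine ⟨h.symm, funext fun c => ?_⟩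
    calc ξ₁.map e' e h.symm c
        = ξ₂.map e' e h.symm (ξ₂.map e e' h (ξ₁.map e' e h.symm c)) :=
          (ξ₂.map_map_symm h _).symm
      _ = ξ₂.map e' e h.symm (ξ₁.map e e' h (ξ₁.map e' e h.symm c)) := by rw [hmap]
      _ = ξ₂.map e' e h.symm c := congrArg _ (ξ₁.map_map_symm h.symm c)
  trans := by
    rintro e e' e'' ⟨h, hmap⟩ ⟨h', hmap'⟩
    refine ⟨h.trans h', funext fun c => ?_⟩
    rw [← ξ₁.comp _ _ _ h h', ← ξ₂.comp _ _ _ h h', hmap, hmap']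

theorem ext_of_eqvGen {ξ₁ ξ₂ : DescentFamily p γ} {rel : E → E → Prop}
    (hp : ∀ e e', p e = p e' → Relation.EqvGen rel e e')
    (hrel : ∀ e e', rel e e' → ∃ h : p e = p e', ξ₁.map e e' h = ξ₂.map e e' h) :
    ξ₁ = ξ₂ := by
  refine ext (funext fun e => funext fun e' => funext fun h => ?_)
  exact ((equivalence_agree ξ₁ ξ₂).eqvGen_iff.mp ((hp e e' h).mono hrel)).2

end DescentFamily

theorem IsSetPushout.eqvGen_of_eq {L A R S : Type u} {a : L → A} {r : L → R}
    {rbar : A → S} {abar : R → S} (hpo : IsSetPushout a r rbar abar) {x x' : L}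
    (h : rbar (a x) = rbar (a x')) :
    Relation.EqvGen (fun y y' => a y = a y' ∨ r y = r y') x x' := by
  set rel : L → L → Prop := fun y y' => a y = a y' ∨ r y = r y'
  -- Test the pushout against `Set L`: a point goes to the zig-zag class of the points over it.
  obtain ⟨cls, ⟨hcls, -⟩, -⟩ := hpo.2
    (fun z => {y | ∃ y', a y' = z ∧ Relation.EqvGen rel y y'})
    (fun z => {y | ∃ y', r y' = z ∧ Relation.EqvGen rel y y'})
    (fun l => Set.ext fun y =>
      ⟨fun ⟨y', hy', hyy'⟩ => ⟨l, rfl, hyy'.trans _ _ _ (.rel _ _ (.inl hy'))⟩,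
       fun ⟨y', hy', hyy'⟩ => ⟨l, rfl, hyy'.trans _ _ _ (.rel _ _ (.inr hy'))⟩⟩)
  have hx : x ∈ cls (rbar (a x')) := by rw [← h, hcls]; exact ⟨x, rfl, .refl x⟩
  rw [hcls] at hx
  obtain ⟨y, hy, hxy⟩ := hx
  exact hxy.trans _ _ _ (.rel _ _ (.inl hy))

/-- in `SET`, if the bottom square is a pushout of `a : L → A` and
`r : L → R` with pushout object `S`, and `ξᵗ` (descent data relative to `a`) and `ξᵝ`
(relative to `r`) for a common `γ : I → L` are coherent, then the coherence witness —
descent data relative to `s = r̄ ∘ a = ā ∘ r` restricting to `ξᵗ` and `ξᵝ` — is unique. -/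
theorem coherence_witness_unique
    {L A R S I : Type u}
    (a : L → A) (r : L → R) (rbar : A → S) (abar : R → S)
    (hpo : IsSetPushout a r rbar abar)
    (γ : I → L)
    (ξτ : DescentFamily a γ) (ξβ : DescentFamily r γ)
    (ξ₁ ξ₂ : DescentFamily (fun l => rbar (a l)) γ)
    (h₁τ : ∀ (x x' : L) (h : a x = a x'),
      ξ₁.map x x' (congrArg rbar h) = ξτ.map x x' h)
    (h₁β : ∀ (x x' : L) (h : r x = r x'),
      ξ₁.map x x' (((hpo.1 x).trans (congrArg abar h)).trans (hpo.1 x').symm) =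
        ξβ.map x x' h)
    (h₂τ : ∀ (x x' : L) (h : a x = a x'),
      ξ₂.map x x' (congrArg rbar h) = ξτ.map x x' h)
    (h₂β : ∀ (x x' : L) (h : r x = r x'),
      ξ₂.map x x' (((hpo.1 x).trans (congrArg abar h)).trans (hpo.1 x').symm) =
        ξβ.map x x' h) :
    ξ₁ = ξ₂ := by
  refine DescentFamily.ext_of_eqvGen (fun x x' => hpo.eqvGen_of_eq) ?_
  rintro x x' (h | h)
  · exact ⟨_, (h₁τ x x' h).trans (h₂τ x x' h).symm⟩
  · exact ⟨_, (h₁β x x' h).trans (h₂β x x' h).symm⟩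
end

section
/- Every domain cycle of a pair of maps a, r : L → A, R possesses a proper subcycle: a domain cycle of length at most that of the original, all of whose elements are pairwise distinct and form a subset of the elements of the original cycle. -/
/-!
Lift the cycle to the periodic sequence `y n = x n` on `ℕ` and take a repetition
`y u = y (u + d)` with `d > 0` minimal (the period `2k+2` is one), so that
`y u, …, y (u+d-1)` are pairwise distinct. If `d` is even, this window is itself a closed
alternating walk. If `d` is odd, the edges entering and leaving `y u` are of the same kind,
so `y (u+d-1)` and `y (u+1)` are related directly and the shorter window
`y (u+1), …, y (u+d-1)` closes up. A window starting at an odd index is a domain cycle of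
`(r, a)`, which rotating by one turns into a domain cycle of `(a, r)`.
-/

/-- A domain cycle of `a` and `r`: a sequence `x₀, …, x_{2k+1}` (indexed cyclically)
with consecutive elements distinct, `a (x_{2i}) = a (x_{2i+1})` and
`r (x_{2i+1}) = r (x_{2i+2})` (indices mod `2k+2`). -/
def IsDomainCycle {L A R : Type*} (a : L → A) (r : L → R) (k : ℕ)
    (x : ZMod (2 * k + 2) → L) : Prop :=
  (∀ j : ZMod (2 * k + 2), x j ≠ x (j + 1)) ∧
  (∀ i : ℕ, i ≤ k →
    a (x ((2 * i : ℕ) : ZMod (2 * k + 2))) = a (x ((2 * i + 1 : ℕ) : ZMod (2 * k + 2)))) ∧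
  (∀ i : ℕ, i ≤ k →
    r (x ((2 * i + 1 : ℕ) : ZMod (2 * k + 2))) = r (x ((2 * i + 2 : ℕ) : ZMod (2 * k + 2))))

section

variable {L A R : Type*} {a : L → A} {r : L → R}

def DomainStep (a : L → A) (r : L → R) (n : ℕ) (p q : L) : Prop :=
  p ≠ q ∧ if Even n then a p = a q else r p = r q

namespace DomainStep

theorem trans_of_ne {n : ℕ} {p q s : L} (hpq : DomainStep a r n p q)
    (hqs : DomainStep a r n q s) (hps : p ≠ s) : DomainStep a r n p s := by
  unfold DomainStep at *
  refine ⟨hps, ?_⟩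
  split_ifs at hpq hqs ⊢ <;> exact hpq.2.trans hqs.2

end DomainStep

theorem domainStep_congr {n n' : ℕ} (h : n % 2 = n' % 2) :
    DomainStep a r n = DomainStep a r n' := by
  ext p q
  simp only [DomainStep, Nat.even_iff, h]

theorem domainStep_succ (n : ℕ) : DomainStep a r (n + 1) = DomainStep r a n := by
  ext p q
  simp only [DomainStep, Nat.even_add_one, ite_not]

theorem isDomainCycle_iff_forall_domainStep {k : ℕ} {x : ZMod (2 * k + 2) → L} :
    IsDomainCycle a r k x ↔ ∀ n : ℕ, DomainStep a r n (x n) (x (n + 1 : ℕ)) := by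
  constructor
  · rintro ⟨hne, ha, hr⟩ n
    obtain ⟨i, hi⟩ := Nat.even_or_odd' (n % (2 * k + 2))
    have hlt := Nat.mod_lt n (show 2 * k + 2 > 0 by omega)
    have hpar : n % (2 * k + 2) % 2 = n % 2 := Nat.mod_mod_of_dvd _ ⟨k + 1, by ring⟩
    rw [← domainStep_congr hpar, ← ZMod.natCast_mod n, Nat.cast_succ, ← ZMod.natCast_mod n]
    rcases hi with hi | hi <;> rw [hi]
    · refine ⟨by simpa using hne (2 * i : ℕ), ?_⟩
      simpa using ha i (by omega)
    · refine ⟨by simpa using hne (2 * i + 1 : ℕ), ?_⟩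
      simpa [add_assoc, one_add_one_eq_two] using hr i (by omega)
  · intro h
    refine ⟨fun j => ?_, fun i _ => ?_, fun i _ => ?_⟩
    · simpa using (h j.val).1
    · simpa [DomainStep] using (h (2 * i)).2
    · simpa [DomainStep, add_assoc, one_add_one_eq_two] using (h (2 * i + 1)).2

theorem IsDomainCycle.rotate {k : ℕ} {x : ZMod (2 * k + 2) → L} (h : IsDomainCycle r a k x) :
    IsDomainCycle a r k (fun j => x (j + 1)) := by
  rw [isDomainCycle_iff_forall_domainStep] at h ⊢
  intro n
  rw [← domainStep_succ]
  simpa using h (n + 1)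

theorem isDomainCycle_of_closedWalk {m : ℕ} {w : ℕ → L}
    (hstep : ∀ i < 2 * m + 1, DomainStep a r i (w i) (w (i + 1)))
    (hclose : DomainStep a r (2 * m + 1) (w (2 * m + 1)) (w 0)) :
    IsDomainCycle a r m (fun t => w t.val) := by
  rw [isDomainCycle_iff_forall_domainStep]
  intro n
  simp only [ZMod.val_natCast]
  have hlt := Nat.mod_lt n (show 2 * m + 2 > 0 by omega)
  have hpar : n % (2 * m + 2) % 2 = n % 2 := Nat.mod_mod_of_dvd n ⟨m + 1, by ring⟩
  rw [← domainStep_congr hpar, ← Nat.mod_add_mod n]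
  rcases (show n % (2 * m + 2) < 2 * m + 1 ∨ n % (2 * m + 2) = 2 * m + 1 by omega) with h | h
  · rw [Nat.mod_eq_of_lt (by omega : n % (2 * m + 2) + 1 < 2 * m + 2)]
    exact hstep _ h
  · rw [h, Nat.mod_self]
    exact hclose

theorem exists_injective_isDomainCycle_of_closedWalk {m s : ℕ} {w : ℕ → L}
    (hstep : ∀ i < 2 * m + 1, DomainStep a r (s + i) (w i) (w (i + 1)))
    (hclose : DomainStep a r (s + (2 * m + 1)) (w (2 * m + 1)) (w 0))
    (hinj : Set.InjOn w (Set.Iio (2 * m + 2))) :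
    ∃ x : ZMod (2 * m + 2) → L,
      IsDomainCycle a r m x ∧ Function.Injective x ∧ Set.range x ⊆ Set.range w := by
  have hinjx : Function.Injective (fun t : ZMod (2 * m + 2) => w t.val) :=
    fun t t' h => ZMod.val_injective _ (hinj (ZMod.val_lt t) (ZMod.val_lt t') h)
  have hrange : Set.range (fun t : ZMod (2 * m + 2) => w t.val) ⊆ Set.range w :=
    Set.range_comp_subset_range _ _
  rcases Nat.even_or_odd s with hs | hs
  · have hpar (i : ℕ) : DomainStep a r (s + i) = DomainStep a r i :=
      domainStep_congr (by rw [Nat.even_iff] at hs; omega)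
    refine ⟨_, isDomainCycle_of_closedWalk ?_ ?_, hinjx, hrange⟩
    · exact fun i hi => hpar i ▸ hstep i hi
    · exact hpar _ ▸ hclose
  · have hpar (i : ℕ) : DomainStep a r (s + i) = DomainStep r a i := by
      rw [← domainStep_succ]
      exact domainStep_congr (by rw [Nat.odd_iff] at hs; omega)
    have hx : IsDomainCycle r a m (fun t => w t.val) := by
      refine isDomainCycle_of_closedWalk ?_ ?_
      · exact fun i hi => hpar i ▸ hstep i hi
      · exact hpar _ ▸ hclose
    exact ⟨_, hx.rotate, hinjx.comp (add_left_injective 1),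
      (Set.range_comp_subset_range (· + 1) _).trans hrange⟩

theorem exists_minimal_collision (y : ℕ → L) {u D : ℕ} (hD : 0 < D) (hu : y u = y (u + D)) :
    ∃ d, 0 < d ∧ d ≤ D ∧ (∃ v, y v = y (v + d)) ∧
      ∀ v e, 0 < e → e < d → y v ≠ y (v + e) := by
  classical
  have hex : ∃ d, 0 < d ∧ ∃ v, y v = y (v + d) := ⟨D, hD, u, hu⟩
  obtain ⟨hd, hcol⟩ := Nat.find_spec hex
  refine ⟨Nat.find hex, hd, Nat.find_min' hex ⟨hD, u, hu⟩, hcol, fun v e he hlt hve => ?_⟩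
  exact Nat.find_min hex hlt ⟨he, v, hve⟩

theorem injOn_shift_of_forall_ne {y : ℕ → L} {d : ℕ}
    (h : ∀ v e, 0 < e → e < d → y v ≠ y (v + e)) (s : ℕ) :
    Set.InjOn (fun i => y (s + i)) (Set.Iio d) := by
  intro i hi j hj hij
  simp only [Set.mem_Iio] at hi hj
  by_contra hne
  rcases lt_or_gt_of_ne hne with hlt | hlt
  · exact h (s + i) (j - i) (by omega) (by omega)
      (by rwa [show s + i + (j - i) = s + j by omega])
  · exact h (s + j) (i - j) (by omega) (by omega)
      (by rw [show s + j + (i - j) = s + i by omega]; exact hij.symm)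

theorem exists_injective_isDomainCycle_of_minimal_collision {y : ℕ → L} {u d : ℕ}
    (hy : ∀ n, DomainStep a r n (y n) (y (n + 1))) (hd : 0 < d) (hu : y u = y (u + d))
    (hmin : ∀ v e, 0 < e → e < d → y v ≠ y (v + e)) :
    ∃ m, 2 * m + 2 ≤ d ∧ ∃ x : ZMod (2 * m + 2) → L,
      IsDomainCycle a r m x ∧ Function.Injective x ∧ Set.range x ⊆ Set.range y := by
  have hwindow (s : ℕ) : Set.range (fun i => y (s + i)) ⊆ Set.range y :=
    Set.range_comp_subset_range _ _
  obtain ⟨j, rfl | rfl⟩ := Nat.even_or_odd' d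
  · obtain ⟨m, rfl⟩ : ∃ m, j = m + 1 := ⟨j - 1, by omega⟩
    have hclose : DomainStep a r (u + (2 * m + 1)) (y (u + (2 * m + 1))) (y (u + 0)) := by
      simpa [hu, add_assoc, mul_add] using hy (u + (2 * m + 1))
    obtain ⟨x, hx, hinj, hrange⟩ := exists_injective_isDomainCycle_of_closedWalk
      (fun i _ => by simpa [add_assoc] using hy (u + i)) hclose
      ((injOn_shift_of_forall_ne hmin u).mono (Set.Iio_subset_Iio (by omega)))
    exact ⟨m, by omega, x, hx, hinj, hrange.trans (hwindow u)⟩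
  · obtain ⟨m, rfl⟩ : ∃ m, j = m + 1 := by
      rcases j with _ | m
      · exact absurd (by simpa using hu) (hy u).1
      · exact ⟨m, rfl⟩
    have hclose :
        DomainStep a r (u + 1 + (2 * m + 1)) (y (u + 1 + (2 * m + 1))) (y (u + 1 + 0)) := by
      have hback := hy (u + 1 + (2 * m + 1))
      rw [show u + 1 + (2 * m + 1) + 1 = u + (2 * (m + 1) + 1) by ring, ← hu] at hback
      have hfirst := hy u
      rw [domainStep_congr (show u % 2 = (u + 1 + (2 * m + 1)) % 2 by omega)] at hfirst
      refine hback.trans_of_ne hfirst fun heq => ?_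
      exact hmin (u + 1) (2 * m + 1) (by omega) (by omega) heq.symm
    obtain ⟨x, hx, hinj, hrange⟩ := exists_injective_isDomainCycle_of_closedWalk
      (fun i _ => by simpa [add_assoc] using hy (u + 1 + i)) hclose
      ((injOn_shift_of_forall_ne hmin (u + 1)).mono (Set.Iio_subset_Iio (by omega)))
    exact ⟨m, by omega, x, hx, hinj, hrange.trans (hwindow (u + 1))⟩

end

/-- every domain cycle possesses a proper subcycle: a domain cycle of
length at most the original one, all of whose elements are pairwise distinct and form
a subset of the elements of the original cycle. -/
theorem domain_cycle_has_proper_subcycle {L A R : Type*} (a : L → A) (r : L → R)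
    (k : ℕ) (x : ZMod (2 * k + 2) → L) (hx : IsDomainCycle a r k x) :
    ∃ (k' : ℕ), k' ≤ k ∧ ∃ x' : ZMod (2 * k' + 2) → L,
      IsDomainCycle a r k' x' ∧ Function.Injective x' ∧
      Set.range x' ⊆ Set.range x := by
  set y : ℕ → L := fun n => x n
  have hy : ∀ n, DomainStep a r n (y n) (y (n + 1)) := isDomainCycle_iff_forall_domainStep.1 hx
  obtain ⟨d, hd, hdk, ⟨u, hu⟩, hmin⟩ :=
    exists_minimal_collision y (u := 0) (D := 2 * k + 2) (by omega) (by simp [y])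
  obtain ⟨m, hm, x', hx', hinj, hrange⟩ :=
    exists_injective_isDomainCycle_of_minimal_collision hy hd hu hmin
  exact ⟨m, by omega, x', hx', hinj, hrange.trans (Set.range_comp_subset_range _ _)⟩
end
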